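/- arXiv:1703.02436 — 6 statements merged into one kernel-verified Lean document; each statement's English description precedes it below -/
import Mathlib

section
/- Let G be a group, j an involution in G, and suppose that for every involution s ≠ j one has Centralizer(js) = {1} ∪ { js' : s' an involution with Centralizer(js') = Centralizer(js) }. Then for every involution s ∈ G and every integer n with (js)^n ≠ 1, Centralizer(js) = Centralizer((js)^n). -/
def IsInvolution {G : Type*} [Group G] (g : G) : Prop := g * g = 1 ∧ g ≠ 1

/-- Condition (5') implies `Centralizer(js) = Centralizer((js)^n)` for all involutions `s`
and integers `n` with `(js)^n ≠ 1`. -/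
theorem centralizer_zpow_eq {G : Type*} [Group G] (j : G) (hj : IsInvolution j)
    (h5' : ∀ s : G, IsInvolution s → s ≠ j →
      (Subgroup.centralizer {j * s} : Set G) =
        {1} ∪ {x | ∃ s' : G, IsInvolution s' ∧
          Subgroup.centralizer {j * s'} = Subgroup.centralizer {j * s} ∧ x = j * s'}) :
    ∀ s : G, IsInvolution s → ∀ n : ℤ, (j * s) ^ n ≠ 1 →
      Subgroup.centralizer {j * s} = Subgroup.centralizer {(j * s) ^ n} := by
  intro s hs n hn
  have hsj : s ≠ j := by
    rintro rfl
    exact hn (by simp [hj.1])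
  have ht : (j * s) ∈ Subgroup.centralizer {j * s} :=
    Subgroup.mem_centralizer_iff.mpr (by rintro y rfl; rfl)
  have htn : (j * s) ^ n ∈ Subgroup.centralizer {j * s} :=
    Subgroup.zpow_mem _ ht n
  have : ((j * s) ^ n : G) ∈ (Subgroup.centralizer {j * s} : Set G) := htn
  rw [h5' s hs hsj] at this
  rcases this with h1 | ⟨s', _, hcent, heq⟩
  · exact absurd h1 hn
  · rw [heq, hcent]
end

section
/- Let G be a group and j an involution satisfying condition (5') (for any involution s ≠ j, Centralizer(js) = {1} ∪ {js' : s' involution, Centralizer(js') = Centralizer(js)}). If s, s' are involutions and n, m are integers with (js)^n = (js')^m ≠ 1, then Centralizer(js) = Centralizer(js'). -/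
/-- Under condition (5'), if `(js)^n = (js')^m ≠ 1` for involutions `s, s'`, then
`Centralizer(js) = Centralizer(js')`. -/
theorem centralizer_eq_of_zpow_eq {G : Type*} [Group G] (j : G) (hj : IsInvolution j)
    (h5' : ∀ s : G, IsInvolution s → s ≠ j →
      (Subgroup.centralizer {j * s} : Set G) =
        {1} ∪ {x | ∃ s'' : G, IsInvolution s'' ∧
          Subgroup.centralizer {j * s''} = Subgroup.centralizer {j * s} ∧ x = j * s''})
    (s s' : G) (hs : IsInvolution s) (hs' : IsInvolution s') (n m : ℤ)
    (heq : (j * s) ^ n = (j * s') ^ m) (hne : (j * s) ^ n ≠ 1) :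
    Subgroup.centralizer {j * s} = Subgroup.centralizer {j * s'} := by
  have hsj : s ≠ j := by
    intro h
    apply hne
    rw [h, hj.1, one_zpow]
  have hs'j : s' ≠ j := by
    intro h
    apply hne
    rw [heq, h, hj.1, one_zpow]
  have mem1 : ((j * s) ^ n : G) ∈ (Subgroup.centralizer {j * s} : Set G) := by
    simp only [SetLike.mem_coe, Subgroup.mem_centralizer_iff]
    rintro g rfl
    exact ((Commute.refl (j * s)).zpow_right n).eq
  have mem2 : ((j * s') ^ m : G) ∈ (Subgroup.centralizer {j * s'} : Set G) := by
    simp only [SetLike.mem_coe, Subgroup.mem_centralizer_iff]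
    rintro g rfl
    exact ((Commute.refl (j * s')).zpow_right m).eq
  rw [h5' s hs hsj] at mem1
  rw [h5' s' hs' hs'j] at mem2
  rcases mem1 with h1 | ⟨t, ht, hct, hxt⟩
  · exact absurd h1 hne
  rcases mem2 with h2 | ⟨t', ht', hct', hxt'⟩
  · exact absurd (heq.trans h2) hne
  have : t = t' := by
    have := hxt.symm.trans (heq.trans hxt')
    exact mul_left_cancel this
  rw [← hct, this, hct']
end

section
/- Let K be a field of characteristic 0 and j ∈ AGL(1,K) the involution x ↦ −x. Then condition (5') holds in AGL(1,K): for any involution s ≠ j, the centralizer of js equals {1} ∪ { js' : s' an involution with Centralizer(js') = Centralizer(js) }. -/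
section Aux
variable {K : Type*} [Field K] [CharZero K]

private lemma affine_apply (f : K ≃ᵃ[K] K) (x : K) : f x = f.linear 1 * x + f 0 := by
  have h1 : f x = f.linear x + f 0 := by
    have := f.toAffineMap.map_vadd (0 : K) x
    simpa [vadd_eq_add] using this
  have h2 : f.linear x = x * f.linear 1 := by
    have := f.linear.map_smul x (1 : K)
    simpa [smul_eq_mul] using this
  rw [h1, h2, mul_comm]

private lemma mul_apply' (f g : K ≃ᵃ[K] K) (x : K) : (f * g) x = f (g x) := rfl
private lemma one_apply' (x : K) : (1 : K ≃ᵃ[K] K) x = x := rfl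

private lemma inv_form (s : K ≃ᵃ[K] K) (hs : IsInvolution s) :
    ∀ x, s x = -x + s 0 := by
  set c := s.linear 1 with hc
  set a := s 0 with ha
  have hsx : ∀ x, s x = c * x + a := fun x => affine_apply s x
  have key : ∀ x, s (s x) = x := by
    intro x
    have := DFunLike.congr_fun hs.1 x
    simpa [mul_apply', one_apply'] using this
  have k0 : c * a + a = 0 := by
    have := key 0
    rw [hsx 0, hsx (c * 0 + a)] at this
    linear_combination this
  have k1 : c * c = 1 := by
    have := key 1
    rw [hsx 1, hsx (c * 1 + a)] at this
    linear_combination this - k0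
  rcases mul_self_eq_one_iff.mp k1 with h1 | h1
  · exfalso
    apply hs.2
    have ha0 : a = 0 := by
      have : a + a = 0 := by linear_combination k0 - a * h1
      exact add_self_eq_zero.mp this
    ext x
    rw [hsx x, h1, ha0, one_apply']; ring
  · intro x; rw [hsx x, h1]; ring

private lemma cent_trans (t : K ≃ᵃ[K] K) (c : K) (hc : c ≠ 0) (ht : ∀ x, t x = x + c) :
    (Subgroup.centralizer {t} : Set (K ≃ᵃ[K] K)) = {g | ∀ x, g x = x + g 0} := by
  ext g
  simp only [SetLike.mem_coe, Subgroup.mem_centralizer_singleton_iff, Set.mem_setOf_eq]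
  constructor
  · intro hcomm x
    have h0 : g c = g 0 + c := by
      have := DFunLike.congr_fun hcomm 0
      simp only [mul_apply', ht, zero_add] at this
      linear_combination this
    have e1 := affine_apply g c
    have hb : g.linear 1 = 1 := mul_right_cancel₀ hc (by linear_combination h0 - e1)
    rw [affine_apply g x, hb, one_mul]
  · intro hg
    ext x
    rw [mul_apply', mul_apply', ht x, hg (x + c), hg x, ht (x + g 0)]; ring
end Aux

/-- Condition (5') holds in `AGL(1,K)` for `j : x ↦ −x`, `char K = 0`. -/
theorem agl_condition_5' {K : Type*} [Field K] [CharZero K]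
    (j : K ≃ᵃ[K] K) (hj : ∀ x : K, j x = -x) :
    ∀ s : K ≃ᵃ[K] K, IsInvolution s → s ≠ j →
      (Subgroup.centralizer {j * s} : Set (K ≃ᵃ[K] K)) =
        {1} ∪ {x | ∃ s' : K ≃ᵃ[K] K, IsInvolution s' ∧
          Subgroup.centralizer {j * s'} = Subgroup.centralizer {j * s} ∧ x = j * s'} := by
  intro s hs hsj
  set a := s 0 with ha
  have hsx : ∀ x, s x = -x + a := inv_form s hs
  have ha0 : a ≠ 0 := by
    intro h
    apply hsj
    ext x
    rw [hsx x, hj, h]; ring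
  have hjs : ∀ x, (j * s) x = x + (-a) := by
    intro x; rw [mul_apply', hsx, hj]; ring
  have hna : (-a : K) ≠ 0 := neg_ne_zero.mpr ha0
  have hC := cent_trans (j * s) (-a) hna hjs
  rw [hC]
  ext g
  simp only [Set.mem_setOf_eq, Set.mem_union, Set.mem_singleton_iff]
  constructor
  · intro hg
    by_cases hd : g 0 = 0
    · left
      ext x
      rw [hg x, hd, one_apply']; ring
    · right
      have hs'x : ∀ x, (j * g) x = -x + (-(g 0)) := by
        intro x; rw [mul_apply', hg x, hj]; ring
      refine ⟨j * g, ⟨?_, ?_⟩, ?_, ?_⟩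
      · ext x
        rw [mul_apply', hs'x, hs'x, one_apply']; ring
      · intro h
        have := DFunLike.congr_fun h 0
        rw [hs'x 0, one_apply'] at this
        simp only [neg_zero, zero_add] at this
        exact hd (neg_eq_zero.mp this)
      · have hjjg : ∀ x, (j * (j * g)) x = x + g 0 := by
          intro x; rw [mul_apply', hs'x, hj]; ring
        have h2 := cent_trans (j * (j * g)) (g 0) hd hjjg
        exact SetLike.coe_set_eq.mp (h2.trans hC.symm)
      · ext x
        rw [mul_apply', hs'x, hj, hg]; ring
  · rintro (rfl | ⟨s', hs', _, rfl⟩)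
    · intro x; rw [one_apply', one_apply']; ring
    · have hs'x := inv_form s' hs'
      intro x
      rw [mul_apply', mul_apply', hs'x, hs'x 0, hj, hj]; ring
end

section
/- Let K be a field of characteristic 0 and j ∈ AGL(1,K) the involution x ↦ −x. Then any two involutions s, t ∈ AGL(1,K) with s, t ≠ j satisfy Centralizer(js) = Centralizer(jt); i.e. all involutions distinct from j are equivalent under the relation ≈_j. -/
/-!
An involution `s ≠ 1` of the line has linear part `-1` (as `2 ≠ 0`), so `s x = a - x` and
`j * s` is the translation `x ↦ x - a`, which is nontrivial because `s ≠ j`. The centralizer of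
a nontrivial translation is the subgroup of translations, whatever the translation vector.
-/

namespace AffineEquiv

variable {K : Type*}

theorem apply_eq_linear_one_mul_add [CommRing K] (f : K ≃ᵃ[K] K) (x : K) :
    f x = f.linear 1 * x + f 0 := by
  have hlin : f.linear x = x * f.linear 1 := by simpa using f.linear.map_smul x 1
  simpa [vadd_eq_add, hlin, mul_comm] using f.map_vadd 0 x

theorem mem_centralizer_constVAdd_iff [CommRing K] [NoZeroDivisors K] {c : K} (hc : c ≠ 0)
    (g : K ≃ᵃ[K] K) :
    g ∈ Subgroup.centralizer {constVAdd K K c} ↔ g.linear 1 = 1 := by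
  rw [Subgroup.mem_centralizer_singleton_iff, AffineEquiv.ext_iff]
  simp only [coe_mul, Function.comp_apply, constVAdd_apply, vadd_eq_add]
  constructor
  · intro h
    have hc0 : g c = c + g 0 := by simpa using h 0
    have h0 : c * (g.linear 1 - 1) = 0 := by
      linear_combination hc0 - apply_eq_linear_one_mul_add g c
    simpa [hc, sub_eq_zero] using h0
  · intro h x
    rw [apply_eq_linear_one_mul_add g, apply_eq_linear_one_mul_add g x, h]
    ring

theorem linear_one_eq_neg_one [Field K] (h2 : (2 : K) ≠ 0) {s : K ≃ᵃ[K] K}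
    (hs : IsInvolution s) : s.linear 1 = -1 := by
  have hss (x : K) : s.linear 1 * (s.linear 1 * x + s 0) + s 0 = x := by
    rw [← apply_eq_linear_one_mul_add, ← apply_eq_linear_one_mul_add,
      ← Function.comp_apply (f := s), ← coe_mul, hs.1, coe_one, id]
  have hsq : s.linear 1 * s.linear 1 = 1 := by linear_combination hss 1 - hss 0
  refine (mul_self_eq_one_iff.mp hsq).resolve_left fun h1 => hs.2 ?_
  have h0 : 2 * s 0 = 0 := by linear_combination (by simpa [h1] using hss 0 : s 0 + s 0 = 0)
  ext x
  rw [apply_eq_linear_one_mul_add, h1, (mul_eq_zero.mp h0).resolve_left h2, coe_one, id]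
  ring

theorem mul_eq_constVAdd_of_linear_one_eq_neg_one [CommRing K] {j s : K ≃ᵃ[K] K}
    (hj : ∀ x : K, j x = -x) (hs : s.linear 1 = -1) : j * s = constVAdd K K (-s 0) := by
  ext x
  rw [coe_mul, Function.comp_apply, hj, apply_eq_linear_one_mul_add, hs, constVAdd_apply,
    vadd_eq_add]
  ring

theorem mem_centralizer_mul_iff_of_isInvolution [Field K] (h2 : (2 : K) ≠ 0)
    {j s : K ≃ᵃ[K] K} (hj : ∀ x : K, j x = -x) (hs : IsInvolution s) (hsj : s ≠ j)
    (g : K ≃ᵃ[K] K) : g ∈ Subgroup.centralizer {j * s} ↔ g.linear 1 = 1 := by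
  have hlin := linear_one_eq_neg_one h2 hs
  have hs0 : -s 0 ≠ 0 := neg_ne_zero.mpr fun h0 => hsj <| by
    ext x
    rw [apply_eq_linear_one_mul_add, hlin, h0, hj]
    ring
  rw [mul_eq_constVAdd_of_linear_one_eq_neg_one hj hlin]
  exact mem_centralizer_constVAdd_iff hs0 g

end AffineEquiv

/-- In `AGL(1,K)` with `j : x ↦ −x`, any two involutions `s, t ≠ j` satisfy
`Centralizer(js) = Centralizer(jt)`. -/
theorem agl_all_involutions_equivalent {K : Type*} [Field K] [CharZero K]
    (j : K ≃ᵃ[K] K) (hj : ∀ x : K, j x = -x)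
    (s t : K ≃ᵃ[K] K) (hs : IsInvolution s) (ht : IsInvolution t)
    (hsj : s ≠ j) (htj : t ≠ j) :
    Subgroup.centralizer {j * s} = Subgroup.centralizer {j * t} := by
  ext g
  rw [AffineEquiv.mem_centralizer_mul_iff_of_isInvolution two_ne_zero hj hs hsj,
    AffineEquiv.mem_centralizer_mul_iff_of_isInvolution two_ne_zero hj ht htj]
end

section
/- Let K be a field of characteristic 0, j ∈ AGL(1,K) the map x ↦ −x, and t the map x ↦ 1 − x. Then every involution s ∈ AGL(1,K) with Centralizer(js) = Centralizer(jt) is of the form s = a⁻¹ t a for some a in A = Centralizer(j) (condition (4')). -/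
/-- Condition (4') in `AGL(1,K)`: with `j : x ↦ −x` and `t : x ↦ 1 − x`, every involution
`s` with `Centralizer(js) = Centralizer(jt)` is conjugate to `t` by an element of
`A = Centralizer(j)`. -/
theorem agl_condition_4' {K : Type*} [Field K] [CharZero K]
    (j t : K ≃ᵃ[K] K) (hj : ∀ x : K, j x = -x) (ht : ∀ x : K, t x = 1 - x)
    (s : K ≃ᵃ[K] K) (hs : IsInvolution s)
    (hc : Subgroup.centralizer {j * s} = Subgroup.centralizer {j * t}) :
    ∃ a ∈ Subgroup.centralizer {j}, s = a⁻¹ * t * a := by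
  obtain ⟨hs2, hs1⟩ := hs
  -- pointwise description of s
  have hss : ∀ x : K, s (s x) = x := by
    intro x
    have := congrArg (fun e : K ≃ᵃ[K] K => e x) hs2
    simpa [AffineEquiv.coe_mul] using this
  set c : K := s 0 with hcdef
  set b : K := s.linear 1 with hbdef
  have haff : ∀ x : K, s x = b * x + c := by
    intro x
    have h0 : s (x +ᵥ (0 : K)) = s.linear x +ᵥ s 0 := s.toAffineMap.map_vadd 0 x
    have hl : s.linear x = x * b := by
      have := (s.linear : K →ₗ[K] K).map_smul x 1
      simpa [smul_eq_mul, hbdef] using this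
    simpa [hl, mul_comm] using h0
  have hb2 : b * b = 1 := by
    have h1 := hss 1
    have h0 := hss 0
    rw [haff, haff] at h1 h0
    linear_combination h1 - h0
  have hbc : b * c + c = 0 := by
    have h0 := hss 0
    rw [haff, haff] at h0
    linear_combination h0
  have hbm : b = -1 := by
    rcases mul_self_eq_one_iff.mp hb2 with h | h
    · exfalso
      apply hs1
      have hc0 : c = 0 := by
        have := hbc
        rw [h] at this
        linear_combination this / 2
      ext x
      simp [AffineEquiv.coe_one, haff, h, hc0]
    · exact h
  have hsx : ∀ x : K, s x = c - x := by
    intro x; rw [haff, hbm]; ring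
  -- c ≠ 0
  have hcne : c ≠ 0 := by
    intro hc0
    have hsj : s = j := by
      ext x; rw [hsx, hj, hc0]; ring
    have hjs1 : j * s = 1 := by
      ext x
      simp [AffineEquiv.coe_mul, hsj, hj, AffineEquiv.coe_one]
    have hjmem : j ∈ Subgroup.centralizer {j * s} := by
      rw [hjs1]
      intro h hh
      simp only [Set.mem_singleton_iff] at hh
      subst hh; simp
    rw [hc] at hjmem
    have := hjmem (j * t) rfl
    have h0 := congrArg (fun e : K ≃ᵃ[K] K => e 0) this
    simp only [AffineEquiv.coe_mul, Function.comp_apply] at h0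
    rw [hj, ht, hj, ht, hj] at h0
    norm_num at h0
    rw [hj] at h0
    norm_num at h0
  -- define a : x ↦ c⁻¹ * x
  refine ⟨(LinearEquiv.smulOfNeZero K K c⁻¹ (inv_ne_zero hcne)).toAffineEquiv, ?_, ?_⟩
  · intro h hh
    simp only [Set.mem_singleton_iff] at hh
    subst hh
    ext x
    simp only [AffineEquiv.coe_mul, Function.comp_apply, LinearEquiv.coe_toAffineEquiv,
      LinearEquiv.smulOfNeZero_apply, hj, Units.smul_def, smul_eq_mul]
    ring
  · have hainv : ((LinearEquiv.smulOfNeZero K K c⁻¹ (inv_ne_zero hcne)).toAffineEquiv)⁻¹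
        = (LinearEquiv.smulOfNeZero K K c⁻¹ (inv_ne_zero hcne)).symm.toAffineEquiv := rfl
    ext x
    rw [hsx]
    simp only [AffineEquiv.coe_mul, Function.comp_apply, hainv,
      LinearEquiv.coe_toAffineEquiv, LinearEquiv.smulOfNeZero_apply, smul_eq_mul]
    rw [ht]
    rw [LinearEquiv.eq_symm_apply]
    simp only [LinearEquiv.smulOfNeZero_apply, Units.smul_def, Units.val_mk0, smul_eq_mul]
    field_simp
end

section
/- Let G be a group, j an involution, and suppose condition (5') holds. If s is an involution with s ≠ j and (js)^n ≠ 1 for all n ≥ 1, then for every nonzero integer n, writing g = (js)^n, the element j·g is an involution s_n with Centralizer(j s_n) = Centralizer(js). -/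
/-- Under condition (5'), if `s` is an involution `≠ j` with `js` of infinite order,
then for every nonzero integer `n`, the element `s_n := j·(js)^n` is an involution with
`Centralizer(j s_n) = Centralizer(js)`. -/
theorem power_involutions_equivalent {G : Type*} [Group G] (j : G) (hj : IsInvolution j)
    (s : G) (hs : IsInvolution s) (hsj : s ≠ j)
    (hinf : ∀ n : ℕ, 0 < n → (j * s) ^ n ≠ 1)
    (h5' : ∀ s' : G, IsInvolution s' → s' ≠ j →
      (Subgroup.centralizer {j * s'} : Set G) =
        {1} ∪ {x | ∃ s'' : G, IsInvolution s'' ∧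
          Subgroup.centralizer {j * s''} = Subgroup.centralizer {j * s'} ∧ x = j * s''}) :
    ∀ n : ℤ, n ≠ 0 →
      IsInvolution (j * (j * s) ^ n) ∧
        Subgroup.centralizer {j * (j * (j * s) ^ n)} = Subgroup.centralizer {j * s} := by
  intro n hn
  -- (js)^n ≠ 1
  have hne : (j * s) ^ n ≠ 1 := by
    intro h
    have h2 : (j * s) ^ (n.natAbs) = 1 := by
      rcases Int.natAbs_eq n with he | he
      · rw [← zpow_natCast, ← he, h]
      · rw [← zpow_natCast]
        have : ((n.natAbs : ℤ)) = -n := by omega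
        rw [this, zpow_neg, h, inv_one]
    exact hinf n.natAbs (by omega) h2
  -- (js)^n is in the centralizer of js
  have key : (j * s) ^ n ∈ (Subgroup.centralizer {j * s} : Set G) := by
    rw [SetLike.mem_coe, Subgroup.mem_centralizer_iff]
    rintro g hg
    rw [Set.mem_singleton_iff] at hg
    subst hg
    exact ((Commute.refl (j * s)).zpow_left n).symm
  rw [h5' s hs hsj] at key
  rcases key with h1 | ⟨s'', hinv, hcent, hx⟩
  · exact absurd h1 hne
  · have hjj : j * (j * s'') = s'' := by
      rw [← mul_assoc, hj.1, one_mul]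
    constructor
    · rw [hx, hjj]; exact hinv
    · rw [hx, hjj]; exact hcent
end
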